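/- arXiv:2502.02769 — 6 statements merged into one kernel-verified Lean document; each statement's English description precedes it below -/
import Mathlib

section
/- Let 𝔨 be a finite-dimensional real Lie algebra and let H : 𝔨 × 𝔨 × 𝔨 → ℝ be an alternating trilinear form that is a Chevalley–Eilenberg 3-cocycle. Then the vector space 𝔤 = 𝔨 ⊕ 𝔨* equipped with the bracket [(v,α),(w,β)] = ([v,w], ad*_v β − ad*_w α + H(v,w,·)), where (ad*_v β)(u) = −β([v,u]), is a Lie algebra; that is, this bracket is bilinear, alternating, and satisfies the Jacobi identity. -/
/-- The coadjoint action of `v ∈ 𝔨` on the dual space: `(ad*_v β)(u) = -β ⁅v, u⁆`. -/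
noncomputable def coad (𝔨 : Type*) [LieRing 𝔨] [LieAlgebra ℝ 𝔨]
    (v : 𝔨) (β : Module.Dual ℝ 𝔨) : Module.Dual ℝ 𝔨 :=
  -(β ∘ₗ (LieAlgebra.ad ℝ 𝔨 v : 𝔨 →ₗ[ℝ] 𝔨))

/-- for a finite-dimensional real Lie algebra `𝔨` and an alternating trilinear
Chevalley–Eilenberg 3-cocycle `H`, the bracket
`[(v,α),(w,β)] = ([v,w], ad*_v β − ad*_w α + H(v,w,·))` on `𝔤 = 𝔨 ⊕ 𝔨*` is bilinear,
alternating and satisfies the Jacobi identity, i.e. it makes `𝔤` a Lie algebra. -/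
theorem statement0 (𝔨 : Type*) [LieRing 𝔨] [LieAlgebra ℝ 𝔨] [FiniteDimensional ℝ 𝔨]
    (H : 𝔨 → 𝔨 → 𝔨 → ℝ)
    -- `H` is trilinear:
    (hadd1 : ∀ v v' w u, H (v + v') w u = H v w u + H v' w u)
    (hsmul1 : ∀ (c : ℝ) v w u, H (c • v) w u = c • H v w u)
    (hadd2 : ∀ v w w' u, H v (w + w') u = H v w u + H v w' u)
    (hsmul2 : ∀ (c : ℝ) v w u, H v (c • w) u = c • H v w u)
    (hadd3 : ∀ v w u u', H v w (u + u') = H v w u + H v w u')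
    (hsmul3 : ∀ (c : ℝ) v w u, H v w (c • u) = c • H v w u)
    -- `H` is alternating:
    (halt12 : ∀ v u, H v v u = 0)
    (halt23 : ∀ v w, H v w w = 0)
    (halt13 : ∀ v w, H v w v = 0)
    -- `H` is a Chevalley–Eilenberg 3-cocycle (with trivial coefficients):
    (hcocycle : ∀ x y z w : 𝔨,
      -H ⁅x, y⁆ z w + H ⁅x, z⁆ y w - H ⁅x, w⁆ y z
        - H ⁅y, z⁆ x w + H ⁅y, w⁆ x z - H ⁅z, w⁆ x y = 0) :
    ∀ B : (𝔨 × Module.Dual ℝ 𝔨) → (𝔨 × Module.Dual ℝ 𝔨) → (𝔨 × Module.Dual ℝ 𝔨),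
      (B = fun p q =>
        (⁅p.1, q.1⁆,
          coad 𝔨 p.1 q.2 - coad 𝔨 q.1 p.2 +
            (⟨⟨fun u => H p.1 q.1 u, hadd3 p.1 q.1⟩,
              fun c u => hsmul3 c p.1 q.1 u⟩ : Module.Dual ℝ 𝔨))) →
      -- `B` is bilinear:
      (∀ p p' q, B (p + p') q = B p q + B p' q) ∧
      (∀ (c : ℝ) p q, B (c • p) q = c • B p q) ∧
      (∀ p q q', B p (q + q') = B p q + B p q') ∧
      (∀ (c : ℝ) p q, B p (c • q) = c • B p q) ∧
      -- `B` is alternating: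
      (∀ p, B p p = 0) ∧
      -- `B` satisfies the Jacobi identity:
      (∀ p q r, B p (B q r) + B q (B r p) + B r (B p q) = 0) := by

  -- skew-symmetry consequences of alternation
  have hswap12 : ∀ v w u, H w v u = -H v w u := by
    intro v w u
    have h := halt12 (v + w) u
    rw [hadd1, hadd2, hadd2, halt12, halt12] at h
    linarith
  have hswap23 : ∀ v w u, H v u w = -H v w u := by
    intro v w u
    have h := halt23 v (w + u)
    rw [hadd2, hadd3, hadd3, halt23, halt23] at h
    linarith
  have hneg1 : ∀ v w u, H (-v) w u = -H v w u := by
    intro v w u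
    have h := hsmul1 (-1) v w u
    simpa using h
  intro B hB
  subst hB
  refine ⟨?_, ?_, ?_, ?_, ?_, ?_⟩
  · intro p p' q
    refine Prod.ext (by simp [add_lie]) ?_
    ext u
    simp [coad]
    ring_nf
    rw [hadd1]
    ring
  · intro c p q
    refine Prod.ext (by simp [smul_lie]) ?_
    ext u
    simp [coad, hsmul1, smul_eq_mul]
  · intro p q q'
    refine Prod.ext (by simp [lie_add]) ?_
    ext u
    simp [coad]
    rw [hadd2]
    ring
  · intro c p q
    refine Prod.ext (by simp [lie_smul]) ?_
    ext u
    simp [coad, hsmul2, smul_eq_mul]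
  · intro p
    refine Prod.ext (by simp) ?_
    ext u
    simp [coad, halt12]
  · intro p q r
    obtain ⟨x, α⟩ := p
    obtain ⟨y, β⟩ := q
    obtain ⟨z, γ⟩ := r
    refine Prod.ext ?_ ?_
    · simpa using lie_jacobi x y z
    · ext u
      simp only [coad, Prod.snd_add, Prod.fst_add, LinearMap.add_apply, LinearMap.sub_apply,
        LinearMap.neg_apply, LinearMap.comp_apply, LieAlgebra.ad_apply, LinearMap.coe_mk,
        AddHom.coe_mk, Prod.snd_zero, LinearMap.zero_apply, map_sub, map_add, map_neg]
      have e1 : ∀ a b : 𝔨, α ⁅⁅a, b⁆, u⁆ = α ⁅a, ⁅b, u⁆⁆ - α ⁅b, ⁅a, u⁆⁆ := by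
        intro a b; rw [lie_lie, map_sub]
      have e2 : ∀ a b : 𝔨, β ⁅⁅a, b⁆, u⁆ = β ⁅a, ⁅b, u⁆⁆ - β ⁅b, ⁅a, u⁆⁆ := by
        intro a b; rw [lie_lie, map_sub]
      have e3 : ∀ a b : 𝔨, γ ⁅⁅a, b⁆, u⁆ = γ ⁅a, ⁅b, u⁆⁆ - γ ⁅b, ⁅a, u⁆⁆ := by
        intro a b; rw [lie_lie, map_sub]
      have hc := hcocycle x y z u
      have s1 : H x ⁅y, z⁆ u = -H ⁅y, z⁆ x u := hswap12 _ _ _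
      have s2 : H y ⁅z, x⁆ u = -H ⁅z, x⁆ y u := hswap12 _ _ _
      have s3 : H z ⁅x, y⁆ u = -H ⁅x, y⁆ z u := hswap12 _ _ _
      have n1 : H ⁅z, x⁆ y u = -H ⁅x, z⁆ y u := by
        rw [← lie_skew x z, hneg1]; ring
      have t1 : H y z ⁅x, u⁆ = H ⁅x, u⁆ y z := by
        linarith [hswap12 y ⁅x,u⁆ z, hswap23 y z ⁅x,u⁆]
      have t2 : H z x ⁅y, u⁆ = H ⁅y, u⁆ z x := by
        linarith [hswap12 z ⁅y,u⁆ x, hswap23 z x ⁅y,u⁆]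
      have t3 : H x y ⁅z, u⁆ = H ⁅z, u⁆ x y := by
        linarith [hswap12 x ⁅z,u⁆ y, hswap23 x y ⁅z,u⁆]
      have n2 : H ⁅y, u⁆ z x = -H ⁅y, u⁆ x z := hswap23 _ x z
      linarith [e1 y z, e1 z x, e1 x y, e2 y z, e2 z x, e2 x y,
        e3 y z, e3 z x, e3 x y, hc, s1, s2, s3, n1, n2, t1, t2, t3]
end

section
/- Let 𝔨 be a finite-dimensional real Lie algebra and let H : 𝔨 × 𝔨 × 𝔨 → ℝ be an alternating trilinear form that is a Chevalley–Eilenberg 3-cocycle. On the Lie algebra 𝔤 = 𝔨 ⊕ 𝔨* with bracket [(v,α),(w,β)] = ([v,w], ad*_v β − ad*_w α + H(v,w,·)), where (ad*_v β)(u) = −β([v,u]), the symmetric bilinear form ⟨(v,α),(w,β)⟩ = (1/2)(α(w) + β(v)) is nondegenerate and invariant, i.e. ⟨[x,y],z⟩ + ⟨y,[x,z]⟩ = 0 for all x,y,z ∈ 𝔤. Hence (𝔤, ⟨·,·⟩) is a quadratic Lie algebra. -/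
/-- on the Lie algebra `𝔤 = 𝔨 ⊕ 𝔨*` with bracket
`[(v,α),(w,β)] = ([v,w], ad*_v β − ad*_w α + H(v,w,·))`, the symmetric bilinear form
`⟨(v,α),(w,β)⟩ = (1/2)(α(w) + β(v))` is nondegenerate and invariant, so `(𝔤, ⟨·,·⟩)` is a
quadratic Lie algebra. -/
theorem statement1 (𝔨 : Type*) [LieRing 𝔨] [LieAlgebra ℝ 𝔨] [FiniteDimensional ℝ 𝔨]
    (H : 𝔨 → 𝔨 → 𝔨 → ℝ)
    -- `H` is trilinear:
    (hadd1 : ∀ v v' w u, H (v + v') w u = H v w u + H v' w u)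
    (hsmul1 : ∀ (c : ℝ) v w u, H (c • v) w u = c • H v w u)
    (hadd2 : ∀ v w w' u, H v (w + w') u = H v w u + H v w' u)
    (hsmul2 : ∀ (c : ℝ) v w u, H v (c • w) u = c • H v w u)
    (hadd3 : ∀ v w u u', H v w (u + u') = H v w u + H v w u')
    (hsmul3 : ∀ (c : ℝ) v w u, H v w (c • u) = c • H v w u)
    -- `H` is alternating:
    (halt12 : ∀ v u, H v v u = 0)
    (halt23 : ∀ v w, H v w w = 0)
    (halt13 : ∀ v w, H v w v = 0)
    -- `H` is a Chevalley–Eilenberg 3-cocycle (with trivial coefficients):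
    (hcocycle : ∀ x y z w : 𝔨,
      -H ⁅x, y⁆ z w + H ⁅x, z⁆ y w - H ⁅x, w⁆ y z
        - H ⁅y, z⁆ x w + H ⁅y, w⁆ x z - H ⁅z, w⁆ x y = 0) :
    ∀ B : (𝔨 × Module.Dual ℝ 𝔨) → (𝔨 × Module.Dual ℝ 𝔨) → (𝔨 × Module.Dual ℝ 𝔨),
      (B = fun p q =>
        (⁅p.1, q.1⁆,
          coad 𝔨 p.1 q.2 - coad 𝔨 q.1 p.2 +
            (⟨⟨fun u => H p.1 q.1 u, hadd3 p.1 q.1⟩,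
              fun c u => hsmul3 c p.1 q.1 u⟩ : Module.Dual ℝ 𝔨))) →
      ∀ P : (𝔨 × Module.Dual ℝ 𝔨) → (𝔨 × Module.Dual ℝ 𝔨) → ℝ,
        (P = fun p q => (1 / 2 : ℝ) * (p.2 q.1 + q.2 p.1)) →
        -- `P` is symmetric:
        (∀ p q, P p q = P q p) ∧
        -- `P` is bilinear:
        (∀ p p' q, P (p + p') q = P p q + P p' q) ∧
        (∀ (c : ℝ) p q, P (c • p) q = c * P p q) ∧
        (∀ p q q', P p (q + q') = P p q + P p q') ∧
        (∀ (c : ℝ) p q, P p (c • q) = c * P p q) ∧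
        -- `P` is nondegenerate:
        (∀ p, (∀ q, P p q = 0) → p = 0) ∧
        -- `P` is invariant:
        (∀ p q r, P (B p q) r + P q (B p r) = 0) := by
  intro B hB P hP
  subst hB hP
  have halt23' : ∀ v w u : 𝔨, H v w u = -H v u w := by
    intro v w u
    have h := halt23 v (w + u)
    rw [hadd2, hadd3, hadd3, halt23, halt23] at h
    linarith
  refine ⟨?_, ?_, ?_, ?_, ?_, ?_, ?_⟩
  · intro p q; simp; ring
  · intro p p' q; simp; ring
  · intro c p q; simp; ring
  · intro p q q'; simp; ring
  · intro c p q; simp; ring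
  · intro p hp
    have hv : p.1 = 0 := by
      rw [← Module.forall_dual_apply_eq_zero_iff ℝ]
      intro β
      have := hp (0, β)
      simp at this
      linarith [this]
    have hα : p.2 = 0 := by
      ext w
      have := hp (w, 0)
      simp at this ⊢
      exact this
    exact Prod.ext hv hα
  · intro p q r
    simp only [coad, Prod.mk.injEq, LinearMap.sub_apply, LinearMap.add_apply,
      LinearMap.neg_apply, LinearMap.coe_comp, Function.comp_apply, LieAlgebra.ad_apply,
      LinearMap.coe_mk, AddHom.coe_mk]
    have h1 : r.2 ⁅q.1, p.1⁆ = -r.2 ⁅p.1, q.1⁆ := by rw [← lie_skew, map_neg]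
    have h2 : p.2 ⁅r.1, q.1⁆ = -p.2 ⁅q.1, r.1⁆ := by rw [← lie_skew, map_neg]
    have h3 : H p.1 r.1 q.1 = -H p.1 q.1 r.1 := by rw [halt23' p.1 r.1 q.1, halt23']
    linarith
end

section
/- Let ℓ, c₁, c₂, c₃, c₇ > 0 be real numbers. In the exterior algebra Λ•(ℝ⁷) with standard basis e₁,…,e₇, define ω₁ = ℓ e₄∧e₅ + √(c₇ℓ) e₆∧e₇, ω₂ = ℓ e₄∧e₆ − √(c₇ℓ) e₅∧e₇, ω₃ = −√(c₇ℓ) e₄∧e₇ − ℓ e₅∧e₆, and set φ¹ = √(c₁c₂c₃) e₁∧e₂∧e₃ + √c₁ e₁∧ω₁ + √c₂ e₂∧ω₂ + √c₃ e₃∧ω₃. Then there exists a basis u₁,…,u₇ of ℝ⁷ such that φ¹ = u₁∧u₂∧u₃ − u₁∧u₄∧u₅ − u₁∧u₆∧u₇ − u₂∧u₄∧u₆ + u₂∧u₅∧u₇ − u₃∧u₄∧u₇ − u₃∧u₅∧u₆; that is, φ¹ is a 3-vector of G₂-type. -/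
/-!
The required basis is a diagonal rescaling `uᵢ = dᵢ eᵢ` of the standard one. Rescaling turns
each of the seven terms `±uᵢ∧uⱼ∧uₖ` of `φ₀` into `±dᵢdⱼdₖ eᵢ∧eⱼ∧eₖ`, and these are exactly the
seven terms of `φ¹` for `d = (√c₁, √c₂, √c₃, -√ℓ, √ℓ, √ℓ, -√c₇)`.
-/

/-- The generator of `Λ•(ℝ⁷)` corresponding to the `i`-th standard basis vector. -/
noncomputable def e7 (i : Fin 7) : ExteriorAlgebra ℝ (Fin 7 → ℝ) :=
  ExteriorAlgebra.ι ℝ (Pi.single i 1)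

/-- The standard associative 3-form `φ₀` evaluated on a family `u₁, …, u₇` (indexed by
`0, …, 6`):
`u₁∧u₂∧u₃ − u₁∧u₄∧u₅ − u₁∧u₆∧u₇ − u₂∧u₄∧u₆ + u₂∧u₅∧u₇ − u₃∧u₄∧u₇ − u₃∧u₅∧u₆`. -/
noncomputable def g2Form (u : Fin 7 → (Fin 7 → ℝ)) : ExteriorAlgebra ℝ (Fin 7 → ℝ) :=
  let w : Fin 7 → ExteriorAlgebra ℝ (Fin 7 → ℝ) := fun i => ExteriorAlgebra.ι ℝ (u i)
  w 0 * w 1 * w 2 - w 0 * w 3 * w 4 - w 0 * w 5 * w 6 - w 1 * w 3 * w 5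
    + w 1 * w 4 * w 6 - w 2 * w 3 * w 6 - w 2 * w 4 * w 5

open ExteriorAlgebra

lemma g2Form_smul (d : Fin 7 → ℝ) (v : Fin 7 → Fin 7 → ℝ) :
    g2Form (fun i => d i • v i) =
      (d 0 * d 1 * d 2) • (ι ℝ (v 0) * ι ℝ (v 1) * ι ℝ (v 2))
        - (d 0 * d 3 * d 4) • (ι ℝ (v 0) * ι ℝ (v 3) * ι ℝ (v 4))
        - (d 0 * d 5 * d 6) • (ι ℝ (v 0) * ι ℝ (v 5) * ι ℝ (v 6))
        - (d 1 * d 3 * d 5) • (ι ℝ (v 1) * ι ℝ (v 3) * ι ℝ (v 5))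
        + (d 1 * d 4 * d 6) • (ι ℝ (v 1) * ι ℝ (v 4) * ι ℝ (v 6))
        - (d 2 * d 3 * d 6) • (ι ℝ (v 2) * ι ℝ (v 3) * ι ℝ (v 6))
        - (d 2 * d 4 * d 5) • (ι ℝ (v 2) * ι ℝ (v 4) * ι ℝ (v 5)) := by
  simp only [g2Form, map_smul, smul_mul_smul_comm]

/-- with standard basis `e₁, …, e₇` (indexed here by `0, …, 6`), the 3-vector
`φ¹ = √(c₁c₂c₃) e₁∧e₂∧e₃ + √c₁ e₁∧ω₁ + √c₂ e₂∧ω₂ + √c₃ e₃∧ω₃`, with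
`ω₁ = ℓ e₄∧e₅ + √(c₇ℓ) e₆∧e₇`, `ω₂ = ℓ e₄∧e₆ − √(c₇ℓ) e₅∧e₇`,
`ω₃ = −√(c₇ℓ) e₄∧e₇ − ℓ e₅∧e₆`, is of G₂-type: it equals the standard associative 3-form in
some basis `u₁, …, u₇` of `ℝ⁷`. -/
theorem statement8 (ℓ c₁ c₂ c₃ c₇ : ℝ) (hℓ : 0 < ℓ) (hc₁ : 0 < c₁) (hc₂ : 0 < c₂)
    (hc₃ : 0 < c₃) (hc₇ : 0 < c₇) :
    ∀ ω₁ ω₂ ω₃ φ : ExteriorAlgebra ℝ (Fin 7 → ℝ),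
      ω₁ = ℓ • (e7 3 * e7 4) + Real.sqrt (c₇ * ℓ) • (e7 5 * e7 6) →
      ω₂ = ℓ • (e7 3 * e7 5) - Real.sqrt (c₇ * ℓ) • (e7 4 * e7 6) →
      ω₃ = -(Real.sqrt (c₇ * ℓ) • (e7 3 * e7 6)) - ℓ • (e7 4 * e7 5) →
      φ = Real.sqrt (c₁ * c₂ * c₃) • (e7 0 * e7 1 * e7 2)
          + Real.sqrt c₁ • (e7 0 * ω₁) + Real.sqrt c₂ • (e7 1 * ω₂)
          + Real.sqrt c₃ • (e7 2 * ω₃) →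
      ∃ u : Module.Basis (Fin 7) ℝ (Fin 7 → ℝ), φ = g2Form (fun i => u i) := by
  rintro ω₁ ω₂ ω₃ φ rfl rfl rfl rfl
  obtain ⟨s, hs, rfl⟩ : ∃ s, 0 < s ∧ s * s = ℓ :=
    ⟨√ℓ, Real.sqrt_pos.2 hℓ, Real.mul_self_sqrt hℓ.le⟩
  let d : Fin 7 → ℝ := ![√c₁, √c₂, √c₃, -s, s, s, -√c₇]
  have hd : ∀ i, IsUnit (d i) := by
    intro i
    fin_cases i <;> simp [d, hs.ne', Real.sqrt_ne_zero', *]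
  refine ⟨(Pi.basisFun ℝ (Fin 7)).isUnitSMul hd, ?_⟩
  rw [Real.sqrt_mul hc₇.le, Real.sqrt_mul_self hs.le, Real.sqrt_mul (by positivity),
    Real.sqrt_mul hc₁.le]
  simp only [Module.Basis.isUnitSMul_apply, Pi.basisFun_apply, g2Form_smul, d, e7,
    Matrix.cons_val, mul_add, mul_sub, mul_neg, smul_add, smul_sub, smul_neg, mul_smul_comm,
    smul_smul, mul_assoc]
  match_scalars <;> ring
end

section
/- Let ℓ, c₁, c₂, c₃, c₇ > 0 be real numbers. In the exterior algebra Λ•(ℝ⁷) with standard basis e₁,…,e₇, define ω̃₁ = √(c₇c₁) e₇∧e₁ + √(c₂c₃) e₂∧e₃, ω̃₂ = √(c₇c₂) e₇∧e₂ − √(c₁c₃) e₁∧e₃, ω̃₃ = −√(c₇c₃) e₇∧e₃ − √(c₁c₂) e₁∧e₂, and set φ² = ℓ^{3/2} e₄∧e₅∧e₆ + √ℓ e₄∧ω̃₁ + √ℓ e₅∧ω̃₂ + √ℓ e₆∧ω̃₃. Then there exists a basis u₁,…,u₇ of ℝ⁷ such that φ² = u₁∧u₂∧u₃ − u₁∧u₄∧u₅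 − u₁∧u₆∧u₇ − u₂∧u₄∧u₆ + u₂∧u₅∧u₇ − u₃∧u₄∧u₇ − u₃∧u₅∧u₆; that is, φ² is a 3-vector of G₂-type. -/
/-!
The required basis is a rescaled cyclic shift of the standard one,
`u = (√ℓ e₄, √ℓ e₅, √ℓ e₆, −√c₇ e₇, √c₁ e₁, √c₂ e₂, −√c₃ e₃)`:
substituting it into `φ₀`, each of the seven terms becomes the corresponding term of `φ²`,
e.g. `−u₁∧u₄∧u₅ = √ℓ √c₇ √c₁ e₄∧e₇∧e₁`.
-/

theorem Real.sqrt_pow_of_nonneg {x : ℝ} (hx : 0 ≤ x) (n : ℕ) : √(x ^ n) = √x ^ n := by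
  rw [← Real.sqrt_sq (pow_nonneg (Real.sqrt_nonneg x) n), ← pow_mul, mul_comm, pow_mul,
    Real.sq_sqrt hx]

section ScaledPermBasis

variable {R ι : Type*} [CommRing R] [Fintype ι] [DecidableEq ι]

noncomputable def scaledPermBasis (σ : Equiv.Perm ι) (w : ι → Rˣ) : Module.Basis ι R (ι → R) :=
  ((Pi.basisFun R ι).reindex σ.symm).unitsSMul w

theorem scaledPermBasis_apply (σ : Equiv.Perm ι) (w : ι → Rˣ) (j : ι) :
    scaledPermBasis σ w j = (w j : R) • Pi.single (σ j) 1 := by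
  simp [scaledPermBasis, Module.Basis.unitsSMul_apply, Units.smul_def]

theorem ι_scaledPermBasis (σ : Equiv.Perm ι) (w : ι → Rˣ) (j : ι) :
    ExteriorAlgebra.ι R (scaledPermBasis σ w j) =
      (w j : R) • ExteriorAlgebra.ι R (Pi.single (σ j) 1) := by
  rw [scaledPermBasis_apply, map_smul]

end ScaledPermBasis

/-- with standard basis `e₁, …, e₇` (indexed here by `0, …, 6`), the 3-vector
`φ² = ℓ^{3/2} e₄∧e₅∧e₆ + √ℓ e₄∧ω̃₁ + √ℓ e₅∧ω̃₂ + √ℓ e₆∧ω̃₃`, with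
`ω̃₁ = √(c₇c₁) e₇∧e₁ + √(c₂c₃) e₂∧e₃`, `ω̃₂ = √(c₇c₂) e₇∧e₂ − √(c₁c₃) e₁∧e₃`,
`ω̃₃ = −√(c₇c₃) e₇∧e₃ − √(c₁c₂) e₁∧e₂`, is of G₂-type: it equals the standard associative
3-form in some basis `u₁, …, u₇` of `ℝ⁷`. -/
theorem statement9 (ℓ c₁ c₂ c₃ c₇ : ℝ) (hℓ : 0 < ℓ) (hc₁ : 0 < c₁) (hc₂ : 0 < c₂)
    (hc₃ : 0 < c₃) (hc₇ : 0 < c₇) :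
    ∀ ω₁ ω₂ ω₃ φ : ExteriorAlgebra ℝ (Fin 7 → ℝ),
      ω₁ = Real.sqrt (c₇ * c₁) • (e7 6 * e7 0) + Real.sqrt (c₂ * c₃) • (e7 1 * e7 2) →
      ω₂ = Real.sqrt (c₇ * c₂) • (e7 6 * e7 1) - Real.sqrt (c₁ * c₃) • (e7 0 * e7 2) →
      ω₃ = -(Real.sqrt (c₇ * c₃) • (e7 6 * e7 2)) - Real.sqrt (c₁ * c₂) • (e7 0 * e7 1) →
      φ = Real.sqrt (ℓ ^ 3) • (e7 3 * e7 4 * e7 5)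
          + Real.sqrt ℓ • (e7 3 * ω₁) + Real.sqrt ℓ • (e7 4 * ω₂)
          + Real.sqrt ℓ • (e7 5 * ω₃) →
      ∃ u : Module.Basis (Fin 7) ℝ (Fin 7 → ℝ), φ = g2Form (fun i => u i) := by
  rintro ω₁ ω₂ ω₃ φ rfl rfl rfl rfl
  have hsqrt {x : ℝ} (hx : 0 < x) : √x ≠ 0 := (Real.sqrt_pos.2 hx).ne'
  let w : Fin 7 → ℝˣ := ![Units.mk0 √ℓ (hsqrt hℓ), Units.mk0 √ℓ (hsqrt hℓ),
    Units.mk0 √ℓ (hsqrt hℓ), -Units.mk0 √c₇ (hsqrt hc₇), Units.mk0 √c₁ (hsqrt hc₁),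
    Units.mk0 √c₂ (hsqrt hc₂), -Units.mk0 √c₃ (hsqrt hc₃)]
  refine ⟨scaledPermBasis (Equiv.addRight 3) w, ?_⟩
  simp only [g2Form, ι_scaledPermBasis, e7, w, Equiv.coe_addRight, Matrix.cons_val,
    Units.val_neg, Units.val_mk0, Fin.reduceAdd]
  rw [Real.sqrt_pow_of_nonneg hℓ.le, Real.sqrt_mul hc₇.le, Real.sqrt_mul hc₂.le,
    Real.sqrt_mul hc₇.le, Real.sqrt_mul hc₁.le, Real.sqrt_mul hc₇.le, Real.sqrt_mul hc₁.le]
  simp only [smul_mul_assoc, mul_smul_comm, mul_add, mul_sub, mul_neg, mul_assoc]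
  -- both sides use the same ordered monomials `eᵢ * eⱼ * eₖ`, so no anticommutation is needed
  match_scalars <;> ring
end

section
/- Let s, ℓ, c₇ > 0 be real numbers. In the exterior algebra Λ•(ℝ⁷) with standard basis e₁,…,e₇, define ω = √(sℓ)(e₁∧e₄ + e₂∧e₅ − e₃∧e₆) and Ω₊ = s^{3/2} e₁∧e₂∧e₃ + ℓ√s (e₁∧e₅∧e₆ − e₂∧e₄∧e₆ − e₃∧e₄∧e₅), and set φ³ = √c₇ e₇∧ω + Ω₊. Then there exists a basis u₁,…,u₇ of ℝ⁷ such that φ³ = u₁∧u₂∧u₃ − u₁∧u₄∧u₅ − u₁∧u₆∧u₇ − u₂∧u₄∧u₆ + u₂∧u₅∧u₇ − u₃∧u₄∧u₇ − u₃∧u₅∧u₆; that is, φ³ is a 3-vector of G₂-type. -/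
lemma e7_mul_comm (i j : Fin 7) : e7 i * e7 j = -(e7 j * e7 i) :=
  eq_neg_of_add_eq_zero_left (ExteriorAlgebra.ι_add_mul_swap _ _)

lemma e7_mul_left_comm (i j : Fin 7) (x : ExteriorAlgebra ℝ (Fin 7 → ℝ)) :
    e7 i * (e7 j * x) = -(e7 j * (e7 i * x)) := by
  rw [← mul_assoc, e7_mul_comm i j, neg_mul, mul_assoc]

lemma exists_basis_eq_smul_single {K ι : Type*} [Field K] [Fintype ι] [DecidableEq ι]
    (σ : Equiv.Perm ι) (w : ι → K) (hw : ∀ i, w i ≠ 0) :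
    ∃ u : Module.Basis ι K (ι → K), ⇑u = fun i => w i • Pi.single (σ i) 1 := by
  refine ⟨((Pi.basisFun K ι).reindex σ.symm).unitsSMul fun i => Units.mk0 (w i) (hw i), ?_⟩
  ext1 i
  rw [Module.Basis.unitsSMul_apply, Module.Basis.reindex_apply, Equiv.symm_symm,
    Pi.basisFun_apply, Units.smul_mk0]

lemma ι_single_eq_e7 (i : Fin 7) : ExteriorAlgebra.ι ℝ (Pi.single i 1) = e7 i := rfl

lemma g2Form_scaled_basis (a b c : ℝ) :
    g2Form ![a • Pi.single 0 1, a • Pi.single 1 1, a • Pi.single 2 1, b • Pi.single 3 1,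
        (-c) • Pi.single 6 1, b • Pi.single 5 1, b • Pi.single 4 1]
      = c • (e7 6 * (a * b) • (e7 0 * e7 3 + e7 1 * e7 4 - e7 2 * e7 5))
        + ((a ^ 3) • (e7 0 * e7 1 * e7 2)
          + (b ^ 2 * a) • (e7 0 * e7 4 * e7 5 - e7 1 * e7 3 * e7 5 - e7 2 * e7 3 * e7 4)) := by
  simp only [g2Form, Matrix.cons_val, map_smul, ι_single_eq_e7]
  simp only [mul_add, mul_sub, smul_mul_assoc, mul_smul_comm, mul_assoc, neg_smul, smul_neg,
    mul_neg, neg_mul, e7_mul_comm 6 3, e7_mul_comm 6 4, e7_mul_comm 6 5, e7_mul_comm 5 4,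
    e7_mul_left_comm 6 0, e7_mul_left_comm 6 1, e7_mul_left_comm 6 2]
  module

/-- with standard basis `e₁, …, e₇` (indexed here by `0, …, 6`), the 3-vector
`φ³ = √c₇ e₇∧ω + Ω₊`, with `ω = √(sℓ)(e₁∧e₄ + e₂∧e₅ − e₃∧e₆)` and
`Ω₊ = s^{3/2} e₁∧e₂∧e₃ + ℓ√s (e₁∧e₅∧e₆ − e₂∧e₄∧e₆ − e₃∧e₄∧e₅)`, is of G₂-type: it equals
the standard associative 3-form in some basis `u₁, …, u₇` of `ℝ⁷`. -/
theorem statement10 (s ℓ c₇ : ℝ) (hs : 0 < s) (hℓ : 0 < ℓ) (hc₇ : 0 < c₇) :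
    ∀ ω Ωp φ : ExteriorAlgebra ℝ (Fin 7 → ℝ),
      ω = Real.sqrt (s * ℓ) • (e7 0 * e7 3 + e7 1 * e7 4 - e7 2 * e7 5) →
      Ωp = Real.sqrt (s ^ 3) • (e7 0 * e7 1 * e7 2)
          + (ℓ * Real.sqrt s) • (e7 0 * e7 4 * e7 5 - e7 1 * e7 3 * e7 5
              - e7 2 * e7 3 * e7 4) →
      φ = Real.sqrt c₇ • (e7 6 * ω) + Ωp →
      ∃ u : Module.Basis (Fin 7) ℝ (Fin 7 → ℝ), φ = g2Form (fun i => u i) := by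
  intro ω Ωp φ rfl rfl rfl
  set a := Real.sqrt s
  set b := Real.sqrt ℓ
  set c := Real.sqrt c₇
  have ha : a ≠ 0 := (Real.sqrt_pos.2 hs).ne'
  have hb : b ≠ 0 := (Real.sqrt_pos.2 hℓ).ne'
  have hc : c ≠ 0 := (Real.sqrt_pos.2 hc₇).ne'
  obtain ⟨u, hu⟩ := exists_basis_eq_smul_single (Equiv.swap 4 6) ![a, a, a, b, -c, b, b]
    (by intro i; fin_cases i <;> simp [ha, hb, hc])
  have hu_vec : (fun i => u i) = ![a • Pi.single 0 1, a • Pi.single 1 1, a • Pi.single 2 1,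
      b • Pi.single 3 1, (-c) • Pi.single 6 1, b • Pi.single 5 1, b • Pi.single 4 1] := by
    rw [hu]; ext1 i; fin_cases i <;> rfl
  have hab : Real.sqrt (s * ℓ) = a * b := Real.sqrt_mul hs.le ℓ
  have ha3 : Real.sqrt (s ^ 3) = a ^ 3 := by
    rw [Real.sqrt_eq_iff_eq_sq (by positivity) (by positivity), ← pow_mul, pow_mul',
      Real.sq_sqrt hs.le]
  have hb2a : ℓ * a = b ^ 2 * a := by rw [Real.sq_sqrt hℓ.le]
  refine ⟨u, ?_⟩
  rw [hu_vec, g2Form_scaled_basis, hab, ha3, hb2a]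
end

section
/- Let ℓ, c₁, c₂, c₃, c₇ > 0 be real numbers. Let φ¹ be the alternating 3-form on ℝ⁷ given, in terms of the dual basis v¹,…,v⁷ of the standard basis v₁,…,v₇, by φ¹ = √(c₁c₂c₃) v¹∧v²∧v³ + √c₁ v¹∧ω₁ + √c₂ v²∧ω₂ + √c₃ v³∧ω₃, where ω₁ = ℓ v⁴∧v⁵ + √(c₇ℓ) v⁶∧v⁷, ω₂ = ℓ v⁴∧v⁶ − √(c₇ℓ) v⁵∧v⁷, ω₃ = −√(c₇ℓ) v⁴∧v⁷ − ℓ v⁵∧v⁶. Let g be the symmetric bilinear form on ℝ⁷ with g(vᵢ,vⱼ) = 0 for i ≠ j and g(v₁,v₁) = c₁, g(v₂,v₂) = c₂, g(v₃,v₃) = c₃, g(v₄,v₄) = g(v₅,v₅) = g(v₆,v₆) = ℓ, g(v₇,v₇) = c₇. Then there exists ε ∈ {+1, −1} such that for all x, y ∈ ℝ⁷, (i_x φ¹) ∧ (i_y φ¹) ∧ φ¹ = 6 ε g(x,y) √(c₁c₂c₃c₇ℓ³) · v¹∧v²∧v³∧v⁴∧v⁵∧v⁶∧v⁷. In particular the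 metric determined by φ¹ via g(X,Y) dvol = (1/6)(i_X φ¹)∧(i_Y φ¹)∧φ¹ is g. -/
/-- The basic 1-form `vᶦ` (the `i`-th dual basis vector of `ℝ⁷`), as an element of the exterior
algebra of forms on `ℝ⁷`; wedge product of forms is multiplication in this algebra. -/
noncomputable def v7 (i : Fin 7) : ExteriorAlgebra ℝ (Fin 7 → ℝ) :=
  ExteriorAlgebra.ι ℝ (Pi.single i 1)

/-- The interior product (contraction) `i_x` of forms on `ℝ⁷` with the vector `x ∈ ℝ⁷`. -/
noncomputable def interiorProd (x : Fin 7 → ℝ) :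
    ExteriorAlgebra ℝ (Fin 7 → ℝ) →ₗ[ℝ] ExteriorAlgebra ℝ (Fin 7 → ℝ) :=
  CliffordAlgebra.contractLeft
    (∑ i, x i • (LinearMap.proj i : (Fin 7 → ℝ) →ₗ[ℝ] ℝ))

theorem v7_sq (i : Fin 7) : v7 i * v7 i = 0 := ExteriorAlgebra.ι_sq_zero _

theorem v7_sq' (i : Fin 7) (z : ExteriorAlgebra ℝ (Fin 7 → ℝ)) : v7 i * (v7 i * z) = 0 := by
  rw [← mul_assoc, v7_sq, zero_mul]

theorem v7_swap (i j : Fin 7) (h : j < i) : v7 i * v7 j = -(v7 j * v7 i) := by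
  have := ExteriorAlgebra.ι_add_mul_swap (R := ℝ) (M := Fin 7 → ℝ) (Pi.single i 1) (Pi.single j 1)
  unfold v7; linear_combination (norm := noncomm_ring) this

theorem v7_swap' (i j : Fin 7) (z : ExteriorAlgebra ℝ (Fin 7 → ℝ)) (h : j < i) :
    v7 i * (v7 j * z) = -(v7 j * (v7 i * z)) := by
  rw [← mul_assoc, v7_swap i j h, ← mul_assoc, neg_mul]

theorem interior_v7_mul (x : Fin 7 → ℝ) (i : Fin 7) (z : ExteriorAlgebra ℝ (Fin 7 → ℝ)) :
    interiorProd x (v7 i * z) = x i • z - v7 i * interiorProd x z := by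
  unfold interiorProd v7
  rw [CliffordAlgebra.contractLeft_ι_mul]
  congr 2
  simp [Pi.single_apply, mul_comm]

theorem interior_v7 (x : Fin 7 → ℝ) (i : Fin 7) :
    interiorProd x (v7 i) = x i • 1 := by
  have h := interior_v7_mul x i 1
  rw [mul_one] at h
  rw [h]
  unfold interiorProd
  rw [CliffordAlgebra.contractLeft_one, mul_zero, sub_zero]

set_option maxHeartbeats 4000000 in
/-- for the 3-form `φ¹ = √(c₁c₂c₃) v¹∧v²∧v³ + √c₁ v¹∧ω₁ + √c₂ v²∧ω₂ + √c₃ v³∧ω₃`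
(dual basis indexed here by `0, …, 6`), with
`ω₁ = ℓ v⁴∧v⁵ + √(c₇ℓ) v⁶∧v⁷`, `ω₂ = ℓ v⁴∧v⁶ − √(c₇ℓ) v⁵∧v⁷`, `ω₃ = −√(c₇ℓ) v⁴∧v⁷ − ℓ v⁵∧v⁶`,
there is a sign `ε ∈ {±1}` with
`(i_x φ¹)∧(i_y φ¹)∧φ¹ = 6 ε g(x,y) √(c₁c₂c₃c₇ℓ³) v¹∧⋯∧v⁷` for all `x, y`, where `g` is the
diagonal metric `diag(c₁, c₂, c₃, ℓ, ℓ, ℓ, c₇)`; so the metric determined by `φ¹` is `g`. -/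
theorem statement12 (ℓ c₁ c₂ c₃ c₇ : ℝ) (hℓ : 0 < ℓ) (hc₁ : 0 < c₁) (hc₂ : 0 < c₂)
    (hc₃ : 0 < c₃) (hc₇ : 0 < c₇) :
    ∀ ω₁ ω₂ ω₃ φ : ExteriorAlgebra ℝ (Fin 7 → ℝ),
      ω₁ = ℓ • (v7 3 * v7 4) + Real.sqrt (c₇ * ℓ) • (v7 5 * v7 6) →
      ω₂ = ℓ • (v7 3 * v7 5) - Real.sqrt (c₇ * ℓ) • (v7 4 * v7 6) →
      ω₃ = -(Real.sqrt (c₇ * ℓ) • (v7 3 * v7 6)) - ℓ • (v7 4 * v7 5) →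
      φ = Real.sqrt (c₁ * c₂ * c₃) • (v7 0 * v7 1 * v7 2)
          + Real.sqrt c₁ • (v7 0 * ω₁) + Real.sqrt c₂ • (v7 1 * ω₂)
          + Real.sqrt c₃ • (v7 2 * ω₃) →
      ∀ g : (Fin 7 → ℝ) → (Fin 7 → ℝ) → ℝ,
        (g = fun x y => c₁ * x 0 * y 0 + c₂ * x 1 * y 1 + c₃ * x 2 * y 2
          + ℓ * x 3 * y 3 + ℓ * x 4 * y 4 + ℓ * x 5 * y 5 + c₇ * x 6 * y 6) →
        ∃ ε : ℝ, (ε = 1 ∨ ε = -1) ∧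
          ∀ x y : Fin 7 → ℝ,
            interiorProd x φ * interiorProd y φ * φ
              = (6 * ε * g x y * Real.sqrt (c₁ * c₂ * c₃ * c₇ * ℓ ^ 3)) •
                  (v7 0 * v7 1 * v7 2 * v7 3 * v7 4 * v7 5 * v7 6) := by
  intro ω₁ ω₂ ω₃ φ hω₁ hω₂ hω₃ hφ g hg
  obtain ⟨a, ha, rfl⟩ : ∃ a : ℝ, 0 ≤ a ∧ c₁ = a ^ 2 :=
    ⟨Real.sqrt c₁, Real.sqrt_nonneg _, (Real.sq_sqrt hc₁.le).symm⟩
  obtain ⟨b, hb, rfl⟩ : ∃ b : ℝ, 0 ≤ b ∧ c₂ = b ^ 2 :=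
    ⟨Real.sqrt c₂, Real.sqrt_nonneg _, (Real.sq_sqrt hc₂.le).symm⟩
  obtain ⟨c, hc, rfl⟩ : ∃ c : ℝ, 0 ≤ c ∧ c₃ = c ^ 2 :=
    ⟨Real.sqrt c₃, Real.sqrt_nonneg _, (Real.sq_sqrt hc₃.le).symm⟩
  obtain ⟨d, hd, rfl⟩ : ∃ d : ℝ, 0 ≤ d ∧ c₇ = d ^ 2 :=
    ⟨Real.sqrt c₇, Real.sqrt_nonneg _, (Real.sq_sqrt hc₇.le).symm⟩
  obtain ⟨e, he, rfl⟩ : ∃ e : ℝ, 0 ≤ e ∧ ℓ = e ^ 2 :=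
    ⟨Real.sqrt ℓ, Real.sqrt_nonneg _, (Real.sq_sqrt hℓ.le).symm⟩
  have h1 : Real.sqrt (a ^ 2 * b ^ 2 * c ^ 2) = a * b * c := by
    rw [show a ^ 2 * b ^ 2 * c ^ 2 = (a * b * c) ^ 2 by ring, Real.sqrt_sq (by positivity)]
  have h2 : Real.sqrt (d ^ 2 * e ^ 2) = d * e := by
    rw [show d ^ 2 * e ^ 2 = (d * e) ^ 2 by ring, Real.sqrt_sq (by positivity)]
  have h3 : Real.sqrt (a ^ 2 * b ^ 2 * c ^ 2 * d ^ 2 * (e ^ 2) ^ 3) = a * b * c * d * e ^ 3 := by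
    rw [show a ^ 2 * b ^ 2 * c ^ 2 * d ^ 2 * (e ^ 2) ^ 3 = (a * b * c * d * e ^ 3) ^ 2 by ring,
      Real.sqrt_sq (by positivity)]
  have sa : Real.sqrt (a ^ 2) = a := Real.sqrt_sq ha
  have sb : Real.sqrt (b ^ 2) = b := Real.sqrt_sq hb
  have sc : Real.sqrt (c ^ 2) = c := Real.sqrt_sq hc
  rw [h2] at hω₁ hω₂ hω₃
  rw [h1, sa, sb, sc, hω₁, hω₂, hω₃] at hφ
  subst hg
  refine ⟨1, Or.inl rfl, fun x y => ?_⟩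
  have hP : ∀ z : Fin 7 → ℝ, interiorProd z φ =
      (a * b * c * z 2) • (v7 0 * (v7 1))
      + (-a * b * c * z 1) • (v7 0 * (v7 2))
      + (a * e * e * z 4) • (v7 0 * (v7 3))
      + (-a * e * e * z 3) • (v7 0 * (v7 4))
      + (a * d * e * z 6) • (v7 0 * (v7 5))
      + (-a * d * e * z 5) • (v7 0 * (v7 6))
      + (a * b * c * z 0) • (v7 1 * (v7 2))
      + (b * e * e * z 5) • (v7 1 * (v7 3))
      + (-b * d * e * z 6) • (v7 1 * (v7 4))
      + (-b * e * e * z 3) • (v7 1 * (v7 5))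
      + (b * d * e * z 4) • (v7 1 * (v7 6))
      + (-c * d * e * z 6) • (v7 2 * (v7 3))
      + (-c * e * e * z 5) • (v7 2 * (v7 4))
      + (c * e * e * z 4) • (v7 2 * (v7 5))
      + (c * d * e * z 3) • (v7 2 * (v7 6))
      + (a * e * e * z 0) • (v7 3 * (v7 4))
      + (b * e * e * z 1) • (v7 3 * (v7 5))
      + (-c * d * e * z 2) • (v7 3 * (v7 6))
      + (-c * e * e * z 2) • (v7 4 * (v7 5))
      + (-b * d * e * z 1) • (v7 4 * (v7 6))
      + (a * d * e * z 0) • (v7 5 * (v7 6)) := by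
    intro z
    rw [hφ]
    simp (config := { decide := true }) only [map_add, map_sub, map_neg, map_smul,
      interior_v7_mul, interior_v7, mul_assoc, v7_sq, v7_sq', v7_swap, v7_swap', smul_mul_assoc, mul_smul_comm,
      mul_add, add_mul, mul_sub, sub_mul, neg_mul, mul_neg, smul_neg, neg_neg,
      mul_zero, zero_mul, smul_zero, zero_smul, mul_one, one_mul, add_zero, zero_add, sub_zero, zero_sub]
    module
  have hPQ : ((a * b * c * x 2) • (v7 0 * (v7 1))
      + (-a * b * c * x 1) • (v7 0 * (v7 2))
      + (a * e * e * x 4) • (v7 0 * (v7 3))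
      + (-a * e * e * x 3) • (v7 0 * (v7 4))
      + (a * d * e * x 6) • (v7 0 * (v7 5))
      + (-a * d * e * x 5) • (v7 0 * (v7 6))
      + (a * b * c * x 0) • (v7 1 * (v7 2))
      + (b * e * e * x 5) • (v7 1 * (v7 3))
      + (-b * d * e * x 6) • (v7 1 * (v7 4))
      + (-b * e * e * x 3) • (v7 1 * (v7 5))
      + (b * d * e * x 4) • (v7 1 * (v7 6))
      + (-c * d * e * x 6) • (v7 2 * (v7 3))
      + (-c * e * e * x 5) • (v7 2 * (v7 4))
      + (c * e * e * x 4) • (v7 2 * (v7 5))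
      + (c * d * e * x 3) • (v7 2 * (v7 6))
      + (a * e * e * x 0) • (v7 3 * (v7 4))
      + (b * e * e * x 1) • (v7 3 * (v7 5))
      + (-c * d * e * x 2) • (v7 3 * (v7 6))
      + (-c * e * e * x 2) • (v7 4 * (v7 5))
      + (-b * d * e * x 1) • (v7 4 * (v7 6))
      + (a * d * e * x 0) • (v7 5 * (v7 6)))
      * ((a * b * c * y 2) • (v7 0 * (v7 1))
      + (-a * b * c * y 1) • (v7 0 * (v7 2))
      + (a * e * e * y 4) • (v7 0 * (v7 3))
      + (-a * e * e * y 3) • (v7 0 * (v7 4))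
      + (a * d * e * y 6) • (v7 0 * (v7 5))
      + (-a * d * e * y 5) • (v7 0 * (v7 6))
      + (a * b * c * y 0) • (v7 1 * (v7 2))
      + (b * e * e * y 5) • (v7 1 * (v7 3))
      + (-b * d * e * y 6) • (v7 1 * (v7 4))
      + (-b * e * e * y 3) • (v7 1 * (v7 5))
      + (b * d * e * y 4) • (v7 1 * (v7 6))
      + (-c * d * e * y 6) • (v7 2 * (v7 3))
      + (-c * e * e * y 5) • (v7 2 * (v7 4))
      + (c * e * e * y 4) • (v7 2 * (v7 5))
      + (c * d * e * y 3) • (v7 2 * (v7 6))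
      + (a * e * e * y 0) • (v7 3 * (v7 4))
      + (b * e * e * y 1) • (v7 3 * (v7 5))
      + (-c * d * e * y 2) • (v7 3 * (v7 6))
      + (-c * e * e * y 2) • (v7 4 * (v7 5))
      + (-b * d * e * y 1) • (v7 4 * (v7 6))
      + (a * d * e * y 0) • (v7 5 * (v7 6)))
      = (a * a * b * c * e * e * x 0 * y 4 + a * a * b * c * e * e * x 4 * y 0 + a * b * b * c * e * e * x 1 * y 5 + a * b * b * c * e * e * x 5 * y 1 - a * b * c * c * d * e * x 2 * y 6 - a * b * c * c * d * e * x 6 * y 2) • (v7 0 * (v7 1 * (v7 2 * (v7 3))))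
      + (-a * a * b * c * e * e * x 0 * y 3 - a * a * b * c * e * e * x 3 * y 0 - a * b * b * c * d * e * x 1 * y 6 - a * b * b * c * d * e * x 6 * y 1 - a * b * c * c * e * e * x 2 * y 5 - a * b * c * c * e * e * x 5 * y 2) • (v7 0 * (v7 1 * (v7 2 * (v7 4))))
      + (a * a * b * c * d * e * x 0 * y 6 + a * a * b * c * d * e * x 6 * y 0 - a * b * b * c * e * e * x 1 * y 3 - a * b * b * c * e * e * x 3 * y 1 + a * b * c * c * e * e * x 2 * y 4 + a * b * c * c * e * e * x 4 * y 2) • (v7 0 * (v7 1 * (v7 2 * (v7 5))))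
      + (-a * a * b * c * d * e * x 0 * y 5 - a * a * b * c * d * e * x 5 * y 0 + a * b * b * c * d * e * x 1 * y 4 + a * b * b * c * d * e * x 4 * y 1 + a * b * c * c * d * e * x 2 * y 3 + a * b * c * c * d * e * x 3 * y 2) • (v7 0 * (v7 1 * (v7 2 * (v7 6))))
      + (a * a * b * c * e * e * x 0 * y 2 + a * a * b * c * e * e * x 2 * y 0 + a * b * d * e * e * e * x 4 * y 6 + a * b * d * e * e * e * x 6 * y 4 - a * b * e * e * e * e * x 3 * y 5 - a * b * e * e * e * e * x 5 * y 3) • (v7 0 * (v7 1 * (v7 3 * (v7 4))))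
      + (a * b * b * c * e * e * x 1 * y 2 + a * b * b * c * e * e * x 2 * y 1 + a * b * d * e * e * e * x 5 * y 6 + a * b * d * e * e * e * x 6 * y 5 + a * b * e * e * e * e * x 3 * y 4 + a * b * e * e * e * e * x 4 * y 3) • (v7 0 * (v7 1 * (v7 3 * (v7 5))))
      + (-2 * a * b * c * c * d * e * x 2 * y 2 - 2 * a * b * d * e * e * e * x 4 * y 4 - 2 * a * b * d * e * e * e * x 5 * y 5) • (v7 0 * (v7 1 * (v7 3 * (v7 6))))
      + (-2 * a * b * c * c * e * e * x 2 * y 2 - 2 * a * b * d * d * e * e * x 6 * y 6 - 2 * a * b * e * e * e * e * x 3 * y 3) • (v7 0 * (v7 1 * (v7 4 * (v7 5))))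
      + (-a * b * b * c * d * e * x 1 * y 2 - a * b * b * c * d * e * x 2 * y 1 + a * b * d * d * e * e * x 5 * y 6 + a * b * d * d * e * e * x 6 * y 5 + a * b * d * e * e * e * x 3 * y 4 + a * b * d * e * e * e * x 4 * y 3) • (v7 0 * (v7 1 * (v7 4 * (v7 6))))
      + (a * a * b * c * d * e * x 0 * y 2 + a * a * b * c * d * e * x 2 * y 0 - a * b * d * d * e * e * x 4 * y 6 - a * b * d * d * e * e * x 6 * y 4 + a * b * d * e * e * e * x 3 * y 5 + a * b * d * e * e * e * x 5 * y 3) • (v7 0 * (v7 1 * (v7 5 * (v7 6))))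
      + (-a * a * b * c * e * e * x 0 * y 1 - a * a * b * c * e * e * x 1 * y 0 + a * c * d * e * e * e * x 3 * y 6 + a * c * d * e * e * e * x 6 * y 3 + a * c * e * e * e * e * x 4 * y 5 + a * c * e * e * e * e * x 5 * y 4) • (v7 0 * (v7 2 * (v7 3 * (v7 4))))
      + (-2 * a * b * b * c * e * e * x 1 * y 1 - 2 * a * c * d * d * e * e * x 6 * y 6 - 2 * a * c * e * e * e * e * x 4 * y 4) • (v7 0 * (v7 2 * (v7 3 * (v7 5))))
      + (a * b * c * c * d * e * x 1 * y 2 + a * b * c * c * d * e * x 2 * y 1 + a * c * d * d * e * e * x 5 * y 6 + a * c * d * d * e * e * x 6 * y 5 - a * c * d * e * e * e * x 3 * y 4 - a * c * d * e * e * e * x 4 * y 3) • (v7 0 * (v7 2 * (v7 3 * (v7 6))))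
      + (a * b * c * c * e * e * x 1 * y 2 + a * b * c * c * e * e * x 2 * y 1 - a * c * d * e * e * e * x 5 * y 6 - a * c * d * e * e * e * x 6 * y 5 + a * c * e * e * e * e * x 3 * y 4 + a * c * e * e * e * e * x 4 * y 3) • (v7 0 * (v7 2 * (v7 4 * (v7 5))))
      + (2 * a * b * b * c * d * e * x 1 * y 1 + 2 * a * c * d * e * e * e * x 3 * y 3 + 2 * a * c * d * e * e * e * x 5 * y 5) • (v7 0 * (v7 2 * (v7 4 * (v7 6))))
      + (-a * a * b * c * d * e * x 0 * y 1 - a * a * b * c * d * e * x 1 * y 0 - a * c * d * d * e * e * x 3 * y 6 - a * c * d * d * e * e * x 6 * y 3 - a * c * d * e * e * e * x 4 * y 5 - a * c * d * e * e * e * x 5 * y 4) • (v7 0 * (v7 2 * (v7 5 * (v7 6))))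
      + (a * a * d * e * e * e * x 0 * y 6 + a * a * d * e * e * e * x 6 * y 0 + a * b * e * e * e * e * x 1 * y 3 + a * b * e * e * e * e * x 3 * y 1 - a * c * e * e * e * e * x 2 * y 4 - a * c * e * e * e * e * x 4 * y 2) • (v7 0 * (v7 3 * (v7 4 * (v7 5))))
      + (-a * a * d * e * e * e * x 0 * y 5 - a * a * d * e * e * e * x 5 * y 0 - a * b * d * e * e * e * x 1 * y 4 - a * b * d * e * e * e * x 4 * y 1 - a * c * d * e * e * e * x 2 * y 3 - a * c * d * e * e * e * x 3 * y 2) • (v7 0 * (v7 3 * (v7 4 * (v7 6))))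
      + (a * a * d * e * e * e * x 0 * y 4 + a * a * d * e * e * e * x 4 * y 0 - a * b * d * e * e * e * x 1 * y 5 - a * b * d * e * e * e * x 5 * y 1 + a * c * d * d * e * e * x 2 * y 6 + a * c * d * d * e * e * x 6 * y 2) • (v7 0 * (v7 3 * (v7 5 * (v7 6))))
      + (-a * a * d * e * e * e * x 0 * y 3 - a * a * d * e * e * e * x 3 * y 0 + a * b * d * d * e * e * x 1 * y 6 + a * b * d * d * e * e * x 6 * y 1 + a * c * d * e * e * e * x 2 * y 5 + a * c * d * e * e * e * x 5 * y 2) • (v7 0 * (v7 4 * (v7 5 * (v7 6))))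
      + (2 * a * a * b * c * e * e * x 0 * y 0 + 2 * b * c * d * d * e * e * x 6 * y 6 + 2 * b * c * e * e * e * e * x 5 * y 5) • (v7 1 * (v7 2 * (v7 3 * (v7 4))))
      + (a * b * b * c * e * e * x 0 * y 1 + a * b * b * c * e * e * x 1 * y 0 + b * c * d * e * e * e * x 3 * y 6 + b * c * d * e * e * e * x 6 * y 3 - b * c * e * e * e * e * x 4 * y 5 - b * c * e * e * e * e * x 5 * y 4) • (v7 1 * (v7 2 * (v7 3 * (v7 5))))
      + (-a * b * c * c * d * e * x 0 * y 2 - a * b * c * c * d * e * x 2 * y 0 - b * c * d * d * e * e * x 4 * y 6 - b * c * d * d * e * e * x 6 * y 4 - b * c * d * e * e * e * x 3 * y 5 - b * c * d * e * e * e * x 5 * y 3) • (v7 1 * (v7 2 * (v7 3 * (v7 6))))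
      + (-a * b * c * c * e * e * x 0 * y 2 - a * b * c * c * e * e * x 2 * y 0 + b * c * d * e * e * e * x 4 * y 6 + b * c * d * e * e * e * x 6 * y 4 + b * c * e * e * e * e * x 3 * y 5 + b * c * e * e * e * e * x 5 * y 3) • (v7 1 * (v7 2 * (v7 4 * (v7 5))))
      + (-a * b * b * c * d * e * x 0 * y 1 - a * b * b * c * d * e * x 1 * y 0 + b * c * d * d * e * e * x 3 * y 6 + b * c * d * d * e * e * x 6 * y 3 - b * c * d * e * e * e * x 4 * y 5 - b * c * d * e * e * e * x 5 * y 4) • (v7 1 * (v7 2 * (v7 4 * (v7 6))))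
      + (2 * a * a * b * c * d * e * x 0 * y 0 + 2 * b * c * d * e * e * e * x 3 * y 3 + 2 * b * c * d * e * e * e * x 4 * y 4) • (v7 1 * (v7 2 * (v7 5 * (v7 6))))
      + (-a * b * e * e * e * e * x 0 * y 3 - a * b * e * e * e * e * x 3 * y 0 + b * b * d * e * e * e * x 1 * y 6 + b * b * d * e * e * e * x 6 * y 1 - b * c * e * e * e * e * x 2 * y 5 - b * c * e * e * e * e * x 5 * y 2) • (v7 1 * (v7 3 * (v7 4 * (v7 5))))
      + (a * b * d * e * e * e * x 0 * y 4 + a * b * d * e * e * e * x 4 * y 0 - b * b * d * e * e * e * x 1 * y 5 - b * b * d * e * e * e * x 5 * y 1 - b * c * d * d * e * e * x 2 * y 6 - b * c * d * d * e * e * x 6 * y 2) • (v7 1 * (v7 3 * (v7 4 * (v7 6))))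
      + (a * b * d * e * e * e * x 0 * y 5 + a * b * d * e * e * e * x 5 * y 0 + b * b * d * e * e * e * x 1 * y 4 + b * b * d * e * e * e * x 4 * y 1 - b * c * d * e * e * e * x 2 * y 3 - b * c * d * e * e * e * x 3 * y 2) • (v7 1 * (v7 3 * (v7 5 * (v7 6))))
      + (-a * b * d * d * e * e * x 0 * y 6 - a * b * d * d * e * e * x 6 * y 0 - b * b * d * e * e * e * x 1 * y 3 - b * b * d * e * e * e * x 3 * y 1 - b * c * d * e * e * e * x 2 * y 4 - b * c * d * e * e * e * x 4 * y 2) • (v7 1 * (v7 4 * (v7 5 * (v7 6))))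
      + (a * c * e * e * e * e * x 0 * y 4 + a * c * e * e * e * e * x 4 * y 0 + b * c * e * e * e * e * x 1 * y 5 + b * c * e * e * e * e * x 5 * y 1 + c * c * d * e * e * e * x 2 * y 6 + c * c * d * e * e * e * x 6 * y 2) • (v7 2 * (v7 3 * (v7 4 * (v7 5))))
      + (a * c * d * e * e * e * x 0 * y 3 + a * c * d * e * e * e * x 3 * y 0 + b * c * d * d * e * e * x 1 * y 6 + b * c * d * d * e * e * x 6 * y 1 - c * c * d * e * e * e * x 2 * y 5 - c * c * d * e * e * e * x 5 * y 2) • (v7 2 * (v7 3 * (v7 4 * (v7 6))))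
      + (-a * c * d * d * e * e * x 0 * y 6 - a * c * d * d * e * e * x 6 * y 0 + b * c * d * e * e * e * x 1 * y 3 + b * c * d * e * e * e * x 3 * y 1 + c * c * d * e * e * e * x 2 * y 4 + c * c * d * e * e * e * x 4 * y 2) • (v7 2 * (v7 3 * (v7 5 * (v7 6))))
      + (-a * c * d * e * e * e * x 0 * y 5 - a * c * d * e * e * e * x 5 * y 0 + b * c * d * e * e * e * x 1 * y 4 + b * c * d * e * e * e * x 4 * y 1 - c * c * d * e * e * e * x 2 * y 3 - c * c * d * e * e * e * x 3 * y 2) • (v7 2 * (v7 4 * (v7 5 * (v7 6))))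
      + (2 * a * a * d * e * e * e * x 0 * y 0 + 2 * b * b * d * e * e * e * x 1 * y 1 + 2 * c * c * d * e * e * e * x 2 * y 2) • (v7 3 * (v7 4 * (v7 5 * (v7 6)))) := by
    simp (config := { decide := true }) only [mul_assoc, v7_sq, v7_sq', v7_swap, v7_swap', smul_mul_assoc, mul_smul_comm,
      mul_add, add_mul, mul_sub, sub_mul, neg_mul, mul_neg, smul_neg, neg_neg,
      mul_zero, zero_mul, smul_zero, zero_smul, mul_one, one_mul, add_zero, zero_add, sub_zero, zero_sub]
    module
  rw [hP x, hP y, hPQ, hφ, h3]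
  simp (config := { decide := true }) only [mul_assoc, v7_sq, v7_sq', v7_swap, v7_swap', smul_mul_assoc, mul_smul_comm,
      mul_add, add_mul, mul_sub, sub_mul, neg_mul, mul_neg, smul_neg, neg_neg,
      mul_zero, zero_mul, smul_zero, zero_smul, mul_one, one_mul, add_zero, zero_add, sub_zero, zero_sub]
  module
end
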